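/- arXiv:1509.07277 — 4 statements merged into one kernel-verified Lean document; each statement's English description precedes it below -/
import Mathlib

section
/- For the system ṙ = αr + βr²cos3θ, θ̇ = -βr sin3θ with α,β>0, along any trajectory the function r sin^{1/3}(3θ) + (α/β) S(θ) is constant, where S(θ) = ∫₀^θ sin^{-2/3}(3s) ds, for trajectories staying in the sector 0 < θ < π/3. -/
/-!
Along a trajectory, `u = sin 3θ` satisfies `u' = -3βr u cos 3θ`, so the derivative of `r u^{1/3}`
is `r' u^{1/3} - βr² u^{1/3} cos 3θ = αr u^{1/3}`. Since `S' = u^{-2/3}`, the derivative of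
`(α/β) S(θ)` is `-(α/β) βr u · u^{-2/3} = -αr u^{1/3}`, and the two cancel. The only analytic input
is that `S` is differentiable on the sector, i.e. that `sin^{-2/3}` is integrable near `0`, which
follows from the chord bound `sin x ≥ (sin b / b) x` on `[0, b]`.
-/

open Real MeasureTheory Set intervalIntegral

lemma mul_sin_le_sin_mul {t a : ℝ} (ht₀ : 0 ≤ t) (ht₁ : t ≤ 1) (ha₀ : 0 ≤ a) (ha : a ≤ π) :
    t * sin a ≤ sin (t * a) := by
  simpa using strictConcaveOn_sin_Icc.concaveOn.2 ⟨le_rfl, pi_pos.le⟩ ⟨ha₀, ha⟩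
    (sub_nonneg.2 ht₁) ht₀ (by ring)

lemma intervalIntegrable_sin_rpow {b p : ℝ} (hb₀ : 0 < b) (hb : b < π) (hp₁ : -1 < p)
    (hp₀ : p ≤ 0) : IntervalIntegrable (fun x => sin x ^ p) volume 0 b := by
  have hC : 0 < sin b / b := div_pos (sin_pos_of_pos_of_lt_pi hb₀ hb) hb₀
  refine ((intervalIntegrable_rpow' hp₁).const_mul ((sin b / b) ^ p)).mono_fun
    (continuous_sin.measurable.pow_const p).aestronglyMeasurable ?_
  rw [uIoc_of_le hb₀.le]
  refine (ae_restrict_iff' measurableSet_Ioc).2 (.of_forall fun x ⟨hx₀, hxb⟩ => ?_)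
  have hchord : sin b / b * x ≤ sin x := calc
    sin b / b * x = x / b * sin b := by ring
    _ ≤ sin (x / b * b) :=
      mul_sin_le_sin_mul (div_nonneg hx₀.le hb₀.le) ((div_le_one hb₀).2 hxb) hb₀.le hb.le
    _ = sin x := by rw [div_mul_cancel₀ x hb₀.ne']
  have hpos : 0 < sin b / b * x := mul_pos hC hx₀
  dsimp only
  rw [norm_of_nonneg (rpow_nonneg (hpos.le.trans hchord) p),
    norm_of_nonneg (by positivity), ← mul_rpow hC.le hx₀.le]
  exact rpow_le_rpow_of_nonpos hpos hchord hp₀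

lemma hasDerivAt_integral_sin_mul_rpow {c p b : ℝ} (hc : 0 < c) (hp₁ : -1 < p) (hp₀ : p ≤ 0)
    (hb₀ : 0 < b) (hb : c * b < π) :
    HasDerivAt (fun x => ∫ s in (0 : ℝ)..x, sin (c * s) ^ p) (sin (c * b) ^ p) b := by
  have hcont : Continuous fun s => sin (c * s) := continuous_sin.comp (continuous_const_mul c)
  have hint : IntervalIntegrable (fun s => sin (c * s) ^ p) volume 0 b := by
    simpa [hc.ne'] using
      (intervalIntegrable_sin_rpow (mul_pos hc hb₀) hb hp₁ hp₀).comp_mul_left (c := c)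
  exact integral_hasDerivAt_right hint
    (hcont.measurable.pow_const p).stronglyMeasurable.stronglyMeasurableAtFilter
    (hcont.continuousAt.rpow_const (.inl (sin_pos_of_pos_of_lt_pi (mul_pos hc hb₀) hb).ne'))

noncomputable def firstIntegral (κ r θ : ℝ) : ℝ :=
  r * sin (3 * θ) ^ ((1 : ℝ) / 3) + κ * ∫ s in (0 : ℝ)..θ, sin (3 * s) ^ (-(2 : ℝ) / 3)

lemma hasDerivAt_firstIntegral_comp {α β : ℝ} (hβ : β ≠ 0) {r θ : ℝ → ℝ} {t : ℝ}
    (hsector : θ t ∈ Ioo 0 (π / 3))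
    (hr : HasDerivAt r (α * r t + β * r t ^ 2 * cos (3 * θ t)) t)
    (hθ : HasDerivAt θ (-(β * r t * sin (3 * θ t))) t) :
    HasDerivAt (fun t => firstIntegral (α / β) (r t) (θ t)) 0 t := by
  obtain ⟨hθ₀, hθπ⟩ := hsector
  have hu : 0 < sin (3 * θ t) := sin_pos_of_pos_of_lt_pi (by linarith) (by linarith)
  have hS := (hasDerivAt_integral_sin_mul_rpow (p := -2 / 3) three_pos (by norm_num)
    (by norm_num) hθ₀ (by linarith)).comp t hθ
  have hpow := ((hasDerivAt_sin _).comp t (hθ.const_mul 3)).rpow_const (p := 1 / 3) (.inl hu.ne')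
  refine ((hr.mul hpow).add (hS.const_mul (α / β))).congr_deriv ?_
  have hsplit : sin (3 * θ t) ^ ((1 : ℝ) / 3) = sin (3 * θ t) * sin (3 * θ t) ^ (-(2 : ℝ) / 3) := by
    rw [← rpow_one_add' hu.le (by norm_num)]; norm_num
  rw [Function.comp_apply, show (1 : ℝ) / 3 - 1 = -2 / 3 by norm_num, hsplit]
  field_simp
  ring

theorem stmt1_general (α β : ℝ) (hβ : 0 < β) (r θ : ℝ → ℝ)
    (hsector : ∀ t, θ t ∈ Set.Ioo 0 (Real.pi / 3))
    (hr : ∀ t, HasDerivAt r (α * r t + β * (r t) ^ 2 * Real.cos (3 * θ t)) t)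
    (hθ : ∀ t, HasDerivAt θ (-(β * r t * Real.sin (3 * θ t))) t) :
    ∀ t₁ t₂ : ℝ,
      r t₁ * (Real.sin (3 * θ t₁)) ^ ((1 : ℝ) / 3)
        + (α / β) * ∫ s in (0 : ℝ)..(θ t₁), (Real.sin (3 * s)) ^ (-(2 : ℝ) / 3)
      = r t₂ * (Real.sin (3 * θ t₂)) ^ ((1 : ℝ) / 3)
        + (α / β) * ∫ s in (0 : ℝ)..(θ t₂), (Real.sin (3 * s)) ^ (-(2 : ℝ) / 3) := by
  have hF t := hasDerivAt_firstIntegral_comp hβ.ne' (hsector t) (hr t) (hθ t)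
  exact is_const_of_deriv_eq_zero (fun t => (hF t).differentiableAt) (fun t => (hF t).deriv)

/-- For ṙ = αr + βr²cos3θ, θ̇ = -βr sin3θ with α,β>0, along any trajectory staying
in the sector 0 < θ < π/3, the function r sin^{1/3}(3θ) + (α/β) S(θ) is constant,
where S(θ) = ∫₀^θ sin^{-2/3}(3s) ds. -/
theorem stmt1 (α β : ℝ) (hα : 0 < α) (hβ : 0 < β) (r θ : ℝ → ℝ)
    (hsector : ∀ t, θ t ∈ Set.Ioo 0 (Real.pi / 3))
    (hr : ∀ t, HasDerivAt r (α * r t + β * (r t) ^ 2 * Real.cos (3 * θ t)) t)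
    (hθ : ∀ t, HasDerivAt θ (-(β * r t * Real.sin (3 * θ t))) t) :
    ∀ t₁ t₂ : ℝ,
      r t₁ * (Real.sin (3 * θ t₁)) ^ ((1 : ℝ) / 3)
        + (α / β) * ∫ s in (0 : ℝ)..(θ t₁), (Real.sin (3 * s)) ^ (-(2 : ℝ) / 3)
      = r t₂ * (Real.sin (3 * θ t₂)) ^ ((1 : ℝ) / 3)
        + (α / β) * ∫ s in (0 : ℝ)..(θ t₂), (Real.sin (3 * s)) ^ (-(2 : ℝ) / 3) :=
  stmt1_general α β hβ r θ hsector hr hθ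
end

section
/- Let a planar map g be given in polar coordinates by g(ρ,θ) = (C(ρ + μ)^h, D(ρ + μ)) with constants C, D > 0, h > 1 and parameter μ > 0 small. Then for sufficiently small μ, g has a fixed point (ρ_p, θ_p) with ρ_p = C μ^h (1 + o(1)) and the fixed point is unique among small ρ; in particular ρ_p → 0 as μ → 0. -/
open Filter Topology Set

/-!
Put `s = ρ + μ`. The fixed-point equation `C (ρ + μ)^h = ρ` becomes `s - C s^h = μ` with
`ρ = C s^h`. Since `h > 1`, the left side `ψ s = s - C s^h` has derivative `1 - C h s^(h-1) ≥ 1/2`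
on a small interval `[0, R]`, so `ψ` is a homeomorphism of `[0, R]` onto `[0, ψ R]` and every
small `μ > 0` has exactly one preimage `s(μ) ≤ 2μ`. Writing `ψ s = s (1 - C s^(h-1))` gives
`ρ / (C μ^h) = (s / μ)^h = (1 - C s^(h-1))^(-h) → 1`.
-/

noncomputable section

def powerDefect (C h s : ℝ) : ℝ := s - C * s ^ h

/-- The point where `C h s^(h-1) = 1/2`. -/
def powerDefectRadius (C h : ℝ) : ℝ := (2 * C * h)⁻¹ ^ (h - 1)⁻¹

def powerDefectInv (C h μ : ℝ) : ℝ :=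
  Function.invFunOn (powerDefect C h) (Icc 0 (powerDefectRadius C h)) μ

def powerFixedPoint (C h μ : ℝ) : ℝ := C * powerDefectInv C h μ ^ h

variable {C h s μ : ℝ}

lemma powerDefectRadius_pos (hC : 0 < C) (hh : 1 < h) : 0 < powerDefectRadius C h := by
  have : 0 < h := by linarith
  unfold powerDefectRadius
  positivity

lemma mul_mul_rpow_sub_one_le_half (hC : 0 < C) (hh : 1 < h)
    (hs : s ∈ Icc 0 (powerDefectRadius C h)) : C * h * s ^ (h - 1) ≤ 1 / 2 := by
  have h0 : 0 < h := by linarith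
  calc C * h * s ^ (h - 1) ≤ C * h * powerDefectRadius C h ^ (h - 1) := by
        gcongr
        exacts [hs.1, hs.2]
    _ = 1 / 2 := by
        rw [powerDefectRadius, Real.rpow_inv_rpow (by positivity) (by linarith)]
        field_simp

lemma mul_rpow_sub_one_le_half (hC : 0 < C) (hh : 1 < h)
    (hs : s ∈ Icc 0 (powerDefectRadius C h)) : C * s ^ (h - 1) ≤ 1 / 2 := by
  have := mul_mul_rpow_sub_one_le_half hC hh hs
  nlinarith [Real.rpow_nonneg hs.1 (h - 1)]

lemma half_le_powerDefect (hC : 0 < C) (hh : 1 < h)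
    (hs : s ∈ Icc 0 (powerDefectRadius C h)) : s / 2 ≤ powerDefect C h s := by
  have hsplit : s ^ h = s ^ (h - 1) * s := by
    rw [← Real.rpow_add_one' hs.1 (by linarith), sub_add_cancel]
  have := mul_rpow_sub_one_le_half hC hh hs
  rw [powerDefect, hsplit]
  nlinarith [hs.1]

lemma hasDerivAt_powerDefect (hh : 1 ≤ h) (s : ℝ) :
    HasDerivAt (powerDefect C h) (1 - C * (h * s ^ (h - 1))) s :=
  (hasDerivAt_id s).sub ((Real.hasDerivAt_rpow_const (Or.inr hh)).const_mul C)

lemma continuous_powerDefect (hh : 1 ≤ h) : Continuous (powerDefect C h) :=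
  continuous_iff_continuousAt.2 fun s => (hasDerivAt_powerDefect hh s).continuousAt

lemma strictMonoOn_powerDefect (hC : 0 < C) (hh : 1 < h) :
    StrictMonoOn (powerDefect C h) (Icc 0 (powerDefectRadius C h)) := by
  refine strictMonoOn_of_deriv_pos (convex_Icc _ _) (continuous_powerDefect hh.le).continuousOn
    fun s hs => ?_
  rw [(hasDerivAt_powerDefect hh.le s).deriv]
  have := mul_mul_rpow_sub_one_le_half hC hh (interior_subset hs)
  linarith

lemma powerDefect_zero (hh : h ≠ 0) : powerDefect C h 0 = 0 := by
  simp [powerDefect, Real.zero_rpow hh]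

lemma powerDefect_powerDefectInv (hC : 0 < C) (hh : 1 < h)
    (hμ : μ ∈ Icc 0 (powerDefect C h (powerDefectRadius C h))) :
    powerDefectInv C h μ ∈ Icc 0 (powerDefectRadius C h) ∧
      powerDefect C h (powerDefectInv C h μ) = μ := by
  have hR := (powerDefectRadius_pos hC hh).le
  rw [← powerDefect_zero (C := C) (by linarith : h ≠ 0)] at hμ
  have hex := intermediate_value_Icc hR (continuous_powerDefect hh.le).continuousOn hμ
  exact ⟨Function.invFunOn_mem hex, Function.invFunOn_eq hex⟩

lemma powerDefectInv_powerDefect (hC : 0 < C) (hh : 1 < h)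
    (hs : s ∈ Icc 0 (powerDefectRadius C h)) : powerDefectInv C h (powerDefect C h s) = s :=
  (strictMonoOn_powerDefect hC hh).injOn (Function.invFunOn_mem ⟨s, hs, rfl⟩) hs
    (Function.invFunOn_eq ⟨s, hs, rfl⟩)

lemma eventually_mem_Ioc_powerDefect_radius (hC : 0 < C) (hh : 1 < h) :
    ∀ᶠ μ in 𝓝[>] 0, μ ∈ Ioc 0 (powerDefect C h (powerDefectRadius C h)) := by
  have hR := powerDefectRadius_pos hC hh
  have := half_le_powerDefect hC hh ⟨hR.le, le_rfl⟩
  exact Ioc_mem_nhdsGT (by linarith)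

lemma powerDefectInv_le_two_mul (hC : 0 < C) (hh : 1 < h)
    (hμ : μ ∈ Icc 0 (powerDefect C h (powerDefectRadius C h))) : powerDefectInv C h μ ≤ 2 * μ := by
  obtain ⟨hmem, heq⟩ := powerDefect_powerDefectInv hC hh hμ
  linarith [half_le_powerDefect hC hh hmem]

lemma powerDefectInv_pos (hC : 0 < C) (hh : 1 < h)
    (hμ : μ ∈ Ioc 0 (powerDefect C h (powerDefectRadius C h))) : 0 < powerDefectInv C h μ := by
  obtain ⟨hmem, heq⟩ := powerDefect_powerDefectInv hC hh (Ioc_subset_Icc_self hμ)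
  refine hmem.1.lt_of_ne fun h0 => hμ.1.ne ?_
  rw [← heq, ← h0, powerDefect_zero (by linarith)]

lemma tendsto_powerDefectInv (hC : 0 < C) (hh : 1 < h) :
    Tendsto (powerDefectInv C h) (𝓝[>] 0) (𝓝 0) := by
  have hbound : Tendsto (fun μ : ℝ => 2 * μ) (𝓝[>] 0) (𝓝 0) := by
    simpa using ((continuous_const_mul (2 : ℝ)).tendsto 0).mono_left nhdsWithin_le_nhds
  refine tendsto_of_tendsto_of_tendsto_of_le_of_le' tendsto_const_nhds hbound ?_ ?_ <;>
    filter_upwards [eventually_mem_Ioc_powerDefect_radius hC hh] with μ hμ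
  · exact (powerDefectInv_pos hC hh hμ).le
  · exact powerDefectInv_le_two_mul hC hh (Ioc_subset_Icc_self hμ)

lemma powerFixedPoint_add (hC : 0 < C) (hh : 1 < h)
    (hμ : μ ∈ Icc 0 (powerDefect C h (powerDefectRadius C h))) :
    powerFixedPoint C h μ + μ = powerDefectInv C h μ := by
  have := (powerDefect_powerDefectInv hC hh hμ).2
  rw [powerDefect] at this
  rw [powerFixedPoint]
  linarith

lemma powerFixedPoint_isFixedPt (hC : 0 < C) (hh : 1 < h)
    (hμ : μ ∈ Icc 0 (powerDefect C h (powerDefectRadius C h))) :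
    Function.IsFixedPt (fun ρ => C * (ρ + μ) ^ h) (powerFixedPoint C h μ) := by
  rw [Function.IsFixedPt, powerFixedPoint_add hC hh hμ, powerFixedPoint]

lemma powerFixedPoint_pos (hC : 0 < C) (hh : 1 < h)
    (hμ : μ ∈ Ioc 0 (powerDefect C h (powerDefectRadius C h))) : 0 < powerFixedPoint C h μ := by
  have := powerDefectInv_pos hC hh hμ
  unfold powerFixedPoint
  positivity

lemma powerFixedPoint_le (hC : 0 < C) (hh : 1 < h)
    (hμ : μ ∈ Icc 0 (powerDefect C h (powerDefectRadius C h))) : powerFixedPoint C h μ ≤ μ := by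
  linarith [powerFixedPoint_add hC hh hμ, powerDefectInv_le_two_mul hC hh hμ]

lemma eq_powerFixedPoint (hC : 0 < C) (hh : 1 < h) {ρ : ℝ} (hρ : 0 ≤ ρ) (hμ : 0 ≤ μ)
    (hρμ : ρ + μ ≤ powerDefectRadius C h)
    (hfix : Function.IsFixedPt (fun ρ => C * (ρ + μ) ^ h) ρ) :
    ρ = powerFixedPoint C h μ := by
  have hdefect : powerDefect C h (ρ + μ) = μ := by
    rw [powerDefect, hfix.eq]
    ring
  have hinv := powerDefectInv_powerDefect hC hh ⟨by linarith, hρμ⟩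
  rw [hdefect] at hinv
  rw [powerFixedPoint, hinv, hfix.eq]

lemma mul_rpow_div_mul_powerDefect_rpow (hC : C ≠ 0) (hs : 0 < s)
    (hpos : 0 < 1 - C * s ^ (h - 1)) :
    C * s ^ h / (C * powerDefect C h s ^ h) = (1 - C * s ^ (h - 1)) ^ (-h) := by
  have hfactor : powerDefect C h s = s * (1 - C * s ^ (h - 1)) := by
    rw [powerDefect, Real.rpow_sub_one hs.ne']
    field_simp
  have : 0 < s ^ h := Real.rpow_pos_of_pos hs h
  rw [hfactor, Real.mul_rpow hs.le hpos.le, Real.rpow_neg hpos.le]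
  field_simp

lemma tendsto_powerFixedPoint (hC : 0 < C) (hh : 1 < h) :
    Tendsto (powerFixedPoint C h) (𝓝[>] 0) (𝓝 0) := by
  have hcont : ContinuousAt (fun t : ℝ => C * t ^ h) 0 :=
    continuousAt_const.mul (Real.continuousAt_rpow_const _ _ (Or.inr (by linarith)))
  have hlim := hcont.tendsto.comp (tendsto_powerDefectInv hC hh)
  rw [Real.zero_rpow (by linarith), mul_zero] at hlim
  exact hlim

lemma tendsto_powerFixedPoint_div (hC : 0 < C) (hh : 1 < h) :
    Tendsto (fun μ => powerFixedPoint C h μ / (C * μ ^ h)) (𝓝[>] 0) (𝓝 1) := by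
  have hzero : (0 : ℝ) ^ (h - 1) = 0 := Real.zero_rpow (by linarith)
  have hcont : ContinuousAt (fun t : ℝ => (1 - C * t ^ (h - 1)) ^ (-h)) 0 :=
    (continuousAt_const.sub (continuousAt_const.mul
      (Real.continuousAt_rpow_const _ _ (Or.inr (by linarith))))).rpow_const
      (Or.inl (by simp [hzero]))
  have hlim := hcont.tendsto.comp (tendsto_powerDefectInv hC hh)
  simp only [hzero, mul_zero, sub_zero, Real.one_rpow] at hlim
  refine hlim.congr' ?_
  filter_upwards [eventually_mem_Ioc_powerDefect_radius hC hh] with μ hμ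
  obtain ⟨hmem, heq⟩ := powerDefect_powerDefectInv hC hh (Ioc_subset_Icc_self hμ)
  have := mul_rpow_sub_one_le_half hC hh hmem
  rw [Function.comp_apply, powerFixedPoint, ← mul_rpow_div_mul_powerDefect_rpow hC.ne'
    (powerDefectInv_pos hC hh hμ) (by linarith), heq]

theorem stmt13_general (C h : ℝ) (hC : 0 < C) (hh : 1 < h) :
    ∃ δ > (0 : ℝ), ∃ μ₀ > (0 : ℝ), ∃ P : ℝ → ℝ,
      (∀ μ : ℝ, 0 < μ → μ < μ₀ →
        (0 < P μ ∧ P μ < δ ∧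
         -- (P μ, D (P μ + μ)) is a fixed point of g
         C * (P μ + μ) ^ h = P μ ∧
         -- uniqueness among small ρ
         (∀ ρ : ℝ, 0 < ρ → ρ < δ → C * (ρ + μ) ^ h = ρ → ρ = P μ))) ∧
      Tendsto (fun μ => P μ / (C * μ ^ h)) (𝓝[>] (0 : ℝ)) (𝓝 1) ∧
      Tendsto P (𝓝[>] (0 : ℝ)) (𝓝 0) := by
  have hR := powerDefectRadius_pos hC hh
  have hRdefect := half_le_powerDefect hC hh ⟨hR.le, le_rfl⟩
  refine ⟨powerDefectRadius C h / 2, by positivity, powerDefectRadius C h / 2, by positivity,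
    powerFixedPoint C h, fun μ hμ0 hμ => ?_, tendsto_powerFixedPoint_div hC hh,
    tendsto_powerFixedPoint hC hh⟩
  have hμ' : μ ∈ Ioc 0 (powerDefect C h (powerDefectRadius C h)) := ⟨hμ0, by linarith⟩
  exact ⟨powerFixedPoint_pos hC hh hμ',
    (powerFixedPoint_le hC hh (Ioc_subset_Icc_self hμ')).trans_lt hμ,
    powerFixedPoint_isFixedPt hC hh (Ioc_subset_Icc_self hμ'),
    fun ρ hρ hρδ hfix => eq_powerFixedPoint hC hh hρ.le hμ0.le (by linarith) hfix⟩

/-- For the return map g(ρ,θ) = (C(ρ+μ)^h, D(ρ+μ)) with C, D > 0, h > 1 and small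
μ > 0, there is a unique small fixed point (ρ_p, θ_p); moreover
ρ_p = Cμ^h(1+o(1)) as μ → 0⁺ (in particular ρ_p → 0). -/
theorem stmt13 (C D h : ℝ) (hC : 0 < C) (hD : 0 < D) (hh : 1 < h) :
    ∃ δ > (0 : ℝ), ∃ μ₀ > (0 : ℝ), ∃ P : ℝ → ℝ,
      (∀ μ : ℝ, 0 < μ → μ < μ₀ →
        (0 < P μ ∧ P μ < δ ∧
         -- (P μ, D (P μ + μ)) is a fixed point of g
         C * (P μ + μ) ^ h = P μ ∧
         -- uniqueness among small ρ
         (∀ ρ : ℝ, 0 < ρ → ρ < δ → C * (ρ + μ) ^ h = ρ → ρ = P μ))) ∧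
      Tendsto (fun μ => P μ / (C * μ ^ h)) (𝓝[>] (0 : ℝ)) (𝓝 1) ∧
      Tendsto P (𝓝[>] (0 : ℝ)) (𝓝 0) :=
  stmt13_general C h hC hh
end
end

section
/- The map Φ: Q × Q → SO(4) sending a pair of unit quaternions (l, r) to the linear transformation q ↦ l q r⁻¹ of ℝ⁴ ≅ ℍ is a surjective group homomorphism whose kernel is {(1,1), (-1,-1)}. -/
/-!
Every reflection of `ℍ` has the form `q ↦ -u * star q * u` for a unit `u`, so by the
Cartan–Dieudonné theorem every orthogonal map of `ℍ` is `q ↦ l * q * r⁻¹` or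
`q ↦ l * star q * r⁻¹` with `l`, `r` unit quaternions. Since `det (q ↦ a * q) = |a|⁴`, the
maps of the first kind have determinant `1`, and those of the second kind have determinant
`det star = -1`. If `l * q * r⁻¹ = q` for all `q`, then `l = r` (take `q = 1`) and `l` is central,
hence real, hence `±1`.
-/

open Quaternion

namespace Quaternion

/-- Writing `⟨a, b, c, d⟩ : ℍ` directly produces a term of type `ℍ[ℝ,-1,0,-1]`, on which the
simp lemmas about `ℍ` do not fire. -/
def mk (a b c d : ℝ) : ℍ := ⟨a, b, c, d⟩

@[simp] theorem re_mk (a b c d : ℝ) : (mk a b c d).re = a := rfl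
@[simp] theorem imI_mk (a b c d : ℝ) : (mk a b c d).imI = b := rfl
@[simp] theorem imJ_mk (a b c d : ℝ) : (mk a b c d).imJ = c := rfl
@[simp] theorem imK_mk (a b c d : ℝ) : (mk a b c d).imK = d := rfl

noncomputable def basisOneIJK : Module.Basis (Fin 4) ℝ ℍ :=
  .ofEquivFun (QuaternionAlgebra.linearEquivTuple (-1 : ℝ) 0 (-1))

@[simp] theorem basisOneIJK_repr (q : ℍ) :
    basisOneIJK.repr q = ![q.re, q.imI, q.imJ, q.imK] :=
  rfl

theorem basisOneIJK_apply (i : Fin 4) :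
    basisOneIJK i = ![1, mk 0 1 0 0, mk 0 0 1 0, mk 0 0 0 1] i := by
  refine basisOneIJK.repr.injective (Finsupp.ext fun j => ?_)
  rw [Module.Basis.repr_self, basisOneIJK_repr]
  fin_cases i <;> fin_cases j <;> simp

theorem det_mulLeft (a : ℍ) : LinearMap.det (LinearMap.mulLeft ℝ a) = normSq a ^ 2 := by
  have h : LinearMap.toMatrix basisOneIJK basisOneIJK (LinearMap.mulLeft ℝ a) =
      !![a.re, -a.imI, -a.imJ, -a.imK;
         a.imI, a.re, -a.imK, a.imJ;
         a.imJ, a.imK, a.re, -a.imI;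
         a.imK, -a.imJ, a.imI, a.re] := by
    ext i j
    rw [LinearMap.toMatrix_apply, basisOneIJK_repr, basisOneIJK_apply]
    fin_cases i <;> fin_cases j <;> simp [re_mul, imI_mul, imJ_mul, imK_mul]
  rw [← LinearMap.det_toMatrix basisOneIJK, h, Matrix.det_succ_row_zero]
  simp [Fin.sum_univ_succ, Matrix.det_fin_three, Fin.succAbove, normSq_def']
  ring

def starLinearIsometryEquiv : ℍ ≃ₗᵢ[ℝ] ℍ where
  toFun := star
  invFun := star
  map_add' := star_add
  map_smul' := star_smul
  left_inv := star_star
  right_inv := star_star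
  norm_map' := norm_star

local notation "σ" => starLinearIsometryEquiv

@[simp] theorem starLinearIsometryEquiv_apply (q : ℍ) : σ q = star q := rfl

@[simp] theorem starLinearIsometryEquiv_mul_self : σ * σ = 1 := by
  ext1 q
  exact star_star q

@[simp] theorem starLinearIsometryEquiv_mul_self_mul (φ : ℍ ≃ₗᵢ[ℝ] ℍ) : σ * (σ * φ) = φ := by
  rw [← mul_assoc, starLinearIsometryEquiv_mul_self, one_mul]

theorem det_starLinearIsometryEquiv :
    LinearMap.det ((σ).toLinearEquiv : ℍ →ₗ[ℝ] ℍ) = -1 := by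
  have h : LinearMap.toMatrix basisOneIJK basisOneIJK ((σ).toLinearEquiv : ℍ →ₗ[ℝ] ℍ) =
      Matrix.diagonal ![1, -1, -1, -1] := by
    ext i j
    rw [LinearMap.toMatrix_apply, basisOneIJK_repr, basisOneIJK_apply]
    fin_cases i <;> fin_cases j <;> simp
  rw [← LinearMap.det_toMatrix basisOneIJK, h, Matrix.det_diagonal]
  simp [Fin.prod_univ_four]

theorem det_mulRight (a : ℍ) : LinearMap.det (LinearMap.mulRight ℝ a) = normSq a ^ 2 := by
  have h : LinearMap.mulRight ℝ a = ((σ).toLinearEquiv : ℍ →ₗ[ℝ] ℍ) ∘ₗ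
      LinearMap.mulLeft ℝ (star a) ∘ₗ ((σ).toLinearEquiv).symm :=
    LinearMap.ext fun q => by simp [starLinearIsometryEquiv, star_mul]
  rw [h, LinearMap.det_conj, det_mulLeft, normSq_star]

theorem normSq_eq_one_of_norm_eq_one {u : ℍ} (hu : ‖u‖ = 1) : normSq u = 1 := by
  rw [normSq_eq_norm_mul_self, hu, one_mul]

theorem det_mulRight_inv_comp_mulLeft {l r : ℍ} (hl : ‖l‖ = 1) (hr : ‖r‖ = 1) :
    LinearMap.det ((LinearMap.mulRight ℝ r⁻¹).comp (LinearMap.mulLeft ℝ l)) = 1 := by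
  rw [LinearMap.det_comp, det_mulRight, det_mulLeft, normSq_inv,
    normSq_eq_one_of_norm_eq_one hl, normSq_eq_one_of_norm_eq_one hr]
  norm_num

theorem star_eq_inv_of_norm_eq_one {u : ℍ} (hu : ‖u‖ = 1) : star u = u⁻¹ := by
  rw [inv_def, normSq_eq_one_of_norm_eq_one hu, inv_one, one_smul]

theorem eq_coe_re_of_forall_mul_comm {a : ℍ} (h : ∀ q, a * q = q * a) : a = a.re := by
  have hi := congrArg (fun q : ℍ => (q.imJ, q.imK)) (h (mk 0 1 0 0))
  have hj := congrArg (fun q : ℍ => q.imK) (h (mk 0 0 1 0))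
  simp [imJ_mul, imK_mul] at hi hj
  ext <;> simp <;> linarith

theorem reflection_orthogonal_singleton_of_norm_eq_one {u : ℍ} (hu : ‖u‖ = 1) (q : ℍ) :
    (ℝ ∙ u)ᗮ.reflection q = -(u * star q * u) := by
  have h2re : u * star q + q * star u = ((2 * inner ℝ u q : ℝ) : ℍ) := by
    rw [inner_def, ← self_add_star', star_mul, star_star]
  have hsandwich : u * star q * u = (2 * inner ℝ u q) • u - q := by
    rw [← coe_mul_eq_smul, ← h2re, add_mul, mul_assoc q, star_mul_self,
      normSq_eq_one_of_norm_eq_one hu]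
    simp
  rw [Submodule.reflection_orthogonal_apply, Submodule.reflection_singleton_apply, hsandwich, hu]
  simp only [RCLike.ofReal_one, one_pow, div_one]
  module

def IsLeftRightMul (φ : ℍ ≃ₗᵢ[ℝ] ℍ) : Prop :=
  ∃ l r : ℍ, ‖l‖ = 1 ∧ ‖r‖ = 1 ∧ ∀ q, φ q = l * q * r⁻¹

namespace IsLeftRightMul

variable {φ ψ : ℍ ≃ₗᵢ[ℝ] ℍ}

theorem one : IsLeftRightMul 1 :=
  ⟨1, 1, norm_one, norm_one, fun q => by simp⟩

theorem mul (hφ : IsLeftRightMul φ) (hψ : IsLeftRightMul ψ) : IsLeftRightMul (φ * ψ) := by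
  obtain ⟨l, r, hl, hr, hφ⟩ := hφ
  obtain ⟨l', r', hl', hr', hψ⟩ := hψ
  refine ⟨l * l', r * r', by simp [hl, hl'], by simp [hr, hr'], fun q => ?_⟩
  simp [hφ, hψ, mul_inv_rev, mul_assoc]

theorem inv (hφ : IsLeftRightMul φ) : IsLeftRightMul φ⁻¹ := by
  obtain ⟨l, r, hl, hr, hφ⟩ := hφ
  have hl0 : l ≠ 0 := by rintro rfl; simp at hl
  have hr0 : r ≠ 0 := by rintro rfl; simp at hr
  refine ⟨l⁻¹, r⁻¹, by simp [hl], by simp [hr], fun q => ?_⟩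
  rw [LinearIsometryEquiv.inv_def, LinearIsometryEquiv.symm_apply_eq, hφ]
  simp [mul_assoc, hl0, hr0]

theorem star_conj (hφ : IsLeftRightMul φ) : IsLeftRightMul (σ * φ * σ) := by
  obtain ⟨l, r, hl, hr, hφ⟩ := hφ
  refine ⟨r, l, hr, hl, fun q => ?_⟩
  simp [hφ, star_mul, mul_assoc, star_eq_inv_of_norm_eq_one, hl, hr]

theorem det_eq_one (hφ : IsLeftRightMul φ) :
    LinearMap.det (φ.toLinearEquiv : ℍ →ₗ[ℝ] ℍ) = 1 := by
  obtain ⟨l, r, hl, hr, hφ⟩ := hφ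
  have h : (φ.toLinearEquiv : ℍ →ₗ[ℝ] ℍ) =
      (LinearMap.mulRight ℝ r⁻¹).comp (LinearMap.mulLeft ℝ l) :=
    LinearMap.ext fun q => by simp [hφ]
  rw [h, det_mulRight_inv_comp_mulLeft hl hr]

end IsLeftRightMul

/-- The maps `q ↦ l * q * r⁻¹` and `q ↦ l * star q * r⁻¹` with `l`, `r` unit quaternions. -/
def leftRightMulSubgroup : Subgroup (ℍ ≃ₗᵢ[ℝ] ℍ) where
  carrier := {φ | IsLeftRightMul φ ∨ IsLeftRightMul (φ * σ)}
  one_mem' := .inl .one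
  mul_mem' := by
    rintro φ ψ (hφ | hφ) (hψ | hψ)
    · exact .inl (hφ.mul hψ)
    · exact .inr (by simpa [mul_assoc] using hφ.mul hψ)
    · exact .inr (by simpa [mul_assoc] using hφ.mul hψ.star_conj)
    · exact .inl (by simpa [mul_assoc] using hφ.mul hψ.star_conj)
  inv_mem' := by
    rintro φ (hφ | hφ)
    · exact .inl hφ.inv
    · exact .inr (by simpa [mul_assoc] using hφ.inv.star_conj)

theorem reflection_mem_leftRightMulSubgroup (v : ℍ) :
    (ℝ ∙ v)ᗮ.reflection ∈ leftRightMulSubgroup := by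
  rcases eq_or_ne v 0 with rfl | hv
  · refine .inl ⟨1, 1, norm_one, norm_one, fun q => ?_⟩
    simp [Submodule.reflection_eq_self_iff]
  set u := ‖v‖⁻¹ • v
  have hu : ‖u‖ = 1 := by simp [u, norm_smul, hv]
  have hspan : ℝ ∙ v = ℝ ∙ u :=
    (Submodule.span_singleton_smul_eq (by simpa using hv) v).symm
  refine .inr ⟨-u, u⁻¹, by simp [hu], by simp [hu], fun q => ?_⟩
  simp [hspan, reflection_orthogonal_singleton_of_norm_eq_one hu]

/-- Cartan–Dieudonné: the reflections, each of the form `q ↦ -u * star q * u`, generate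
the orthogonal group. -/
theorem leftRightMulSubgroup_eq_top : leftRightMulSubgroup = ⊤ := by
  rw [eq_top_iff, ← LinearIsometryEquiv.reflections_generate, Subgroup.closure_le]
  rintro _ ⟨v, rfl⟩
  exact reflection_mem_leftRightMulSubgroup v

theorem isLeftRightMul_of_det_eq_one (φ : ℍ ≃ₗᵢ[ℝ] ℍ)
    (hφ : LinearMap.det (φ.toLinearEquiv : ℍ →ₗ[ℝ] ℍ) = 1) : IsLeftRightMul φ := by
  have hmem : φ ∈ leftRightMulSubgroup := leftRightMulSubgroup_eq_top ▸ Subgroup.mem_top φ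
  refine hmem.resolve_right fun hφσ => ?_
  have hcomp : ((φ * σ).toLinearEquiv : ℍ →ₗ[ℝ] ℍ) =
      (φ.toLinearEquiv : ℍ →ₗ[ℝ] ℍ) ∘ₗ (σ).toLinearEquiv :=
    rfl
  have hdet := hφσ.det_eq_one
  rw [hcomp, LinearMap.det_comp, hφ, det_starLinearIsometryEquiv] at hdet
  norm_num at hdet

theorem forall_mul_mul_inv_eq_self_iff {l r : ℍ} (hl : ‖l‖ = 1) :
    (∀ q, l * q * r⁻¹ = q) ↔ (l = 1 ∧ r = 1) ∨ (l = -1 ∧ r = -1) := by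
  refine ⟨fun h => ?_, ?_⟩
  · have hr : r ≠ 0 := by rintro rfl; simpa using h 1
    obtain rfl : l = r := (mul_inv_eq_one₀ hr).1 (by simpa using h 1)
    have hreal := eq_coe_re_of_forall_mul_comm fun q => (mul_inv_eq_iff_eq_mul₀ hr).1 (h q)
    have hre : |l.re| = 1 := by rw [← Real.norm_eq_abs, ← norm_coe, ← hreal, hl]
    rcases abs_eq zero_le_one |>.1 hre with h1 | h1
    · exact .inl ⟨by rw [hreal, h1, coe_one], by rw [hreal, h1, coe_one]⟩
    · exact .inr ⟨by rw [hreal, h1, coe_neg, coe_one], by rw [hreal, h1, coe_neg, coe_one]⟩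
  · rintro (⟨rfl, rfl⟩ | ⟨rfl, rfl⟩) q <;> simp

end Quaternion

/-- The map Φ sending a pair of unit quaternions (l, r) to q ↦ l q r⁻¹ is a
surjective group homomorphism onto SO(4) (the orientation-preserving linear
isometries of ℝ⁴ ≅ ℍ) with kernel {(1,1), (-1,-1)}. -/
theorem stmt16 :
    -- each Φ(l,r) is an isometry of ℝ⁴ ≅ ℍ
    (∀ l r : Quaternion ℝ, ‖l‖ = 1 → ‖r‖ = 1 →
      ∀ q : Quaternion ℝ, ‖l * q * r⁻¹‖ = ‖q‖) ∧
    -- Φ is a homomorphism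
    (∀ l l' r r' q : Quaternion ℝ, ‖l‖ = 1 → ‖l'‖ = 1 → ‖r‖ = 1 → ‖r'‖ = 1 →
      l * (l' * q * r'⁻¹) * r⁻¹ = (l * l') * q * (r * r')⁻¹) ∧
    -- Φ(l,r) has determinant 1, and Φ is onto SO(4)
    (∀ l r : Quaternion ℝ, ‖l‖ = 1 → ‖r‖ = 1 →
      LinearMap.det ((LinearMap.mulRight ℝ r⁻¹).comp (LinearMap.mulLeft ℝ l)) = 1) ∧
    (∀ f : Quaternion ℝ ≃ₗᵢ[ℝ] Quaternion ℝ,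
      LinearMap.det (f.toLinearEquiv : Quaternion ℝ →ₗ[ℝ] Quaternion ℝ) = 1 →
      ∃ l r : Quaternion ℝ, ‖l‖ = 1 ∧ ‖r‖ = 1 ∧ ∀ q, f q = l * q * r⁻¹) ∧
    -- kernel is {(1,1), (-1,-1)}
    (∀ l r : Quaternion ℝ, ‖l‖ = 1 → ‖r‖ = 1 →
      ((∀ q : Quaternion ℝ, l * q * r⁻¹ = q) ↔ (l = 1 ∧ r = 1) ∨ (l = -1 ∧ r = -1))) := by
  refine ⟨fun l r hl hr q => by simp [hl, hr], fun l l' r r' q _ _ _ _ => ?_,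
    fun l r hl hr => det_mulRight_inv_comp_mulLeft hl hr, isLeftRightMul_of_det_eq_one,
    fun l r hl _ => forall_mul_mul_inv_eq_self_iff hl⟩
  simp [mul_inv_rev, mul_assoc]
end

section
/- Let g ∈ SO(4) correspond under the quaternion double cover to the pair ((cos α, sin α·v); (cos β, sin β·w)) with unit vectors v, w ∈ ℝ³, i.e. g(q) = l q r⁻¹ with l = (cos α, sin α v), r = (cos β, sin β w). Then dim Fix⟨g⟩ = 2 if and only if cos α = cos β (assuming g ≠ ±Id). -/
/-!
Fixed points of `q ↦ l q r⁻¹` are the solutions of `l q = q r`. A nonzero solution conjugates `r`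
into `l`, so `re l = re r`, i.e. `cos α = cos β`. Conversely, if `cos α = cos β` and `sin α ≠ 0`
(for `sin α = 0` the map is the identity), then `r = cos α + sin α • w'` with `w' = ±w`, and the
equation becomes `v q = q w'` between pure unit quaternions. Right multiplication by any nonzero
solution `q₀` maps the centralizer `span {1, v}` of `v` onto the solution space, which is therefore
2-dimensional.
-/

open Quaternion Real

section Intertwiners

variable (K : Type*) {A D : Type*} [Field K]

def intertwiners [Ring A] [Algebra K A] (x y : A) : Submodule K A :=
  LinearMap.ker (LinearMap.mulLeft K x - LinearMap.mulRight K y)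

variable {K}

theorem mem_intertwiners [Ring A] [Algebra K A] {x y q : A} :
    q ∈ intertwiners K x y ↔ x * q = q * y := by
  simp [intertwiners, sub_eq_zero]

theorem intertwiners_algebraMap_add_smul [Ring A] [Algebra K A] (c : K) {s : K} (hs : s ≠ 0)
    (x y : A) :
    intertwiners K (algebraMap K A c + s • x) (algebraMap K A c + s • y) = intertwiners K x y := by
  ext q
  simp only [mem_intertwiners, add_mul, mul_add, Algebra.commutes, smul_mul_assoc,
    mul_smul_comm, add_right_inj]
  exact (smul_right_injective A hs).eq_iff

theorem eigenspace_mulRight_inv_comp_mulLeft [DivisionRing D] [Algebra K D] (l : D) {r : D}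
    (hr : r ≠ 0) :
    Module.End.eigenspace ((LinearMap.mulRight K r⁻¹).comp (LinearMap.mulLeft K l)) 1 =
      intertwiners K l r := by
  ext q
  simp [mem_intertwiners, mul_inv_eq_iff_eq_mul₀ hr]

theorem mulRight_inv_comp_mulLeft_algebraMap [DivisionRing D] [Algebra K D] {c : K} (hc : c ≠ 0) :
    (LinearMap.mulRight K (algebraMap K D c)⁻¹).comp (LinearMap.mulLeft K (algebraMap K D c)) =
      LinearMap.id := by
  ext q
  simp [Algebra.commutes, hc]

theorem finrank_intertwiners_eq_of_mem [DivisionRing D] [Algebra K D] {x y q : D}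
    (hq : q ∈ intertwiners K x y) (hq0 : q ≠ 0) :
    Module.finrank K (intertwiners K x y) = Module.finrank K (intertwiners K x x) := by
  rw [mem_intertwiners] at hq
  have hconj : y * q⁻¹ = q⁻¹ * x := by
    rw [eq_inv_mul_iff_mul_eq₀ hq0, ← mul_assoc, ← hq, mul_assoc, mul_inv_cancel₀ hq0, mul_one]
  have hmap : (intertwiners K x x).map ((Units.mk0 q hq0).mulRightLinearEquiv K : D →ₗ[K] D) =
      intertwiners K x y := by
    ext p
    rw [Submodule.mem_map_equiv, Units.symm_mulRightLinearEquiv_apply, mem_intertwiners,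
      mem_intertwiners, Units.val_inv_eq_inv_val, Units.val_mk0, mul_assoc, ← hconj,
      ← mul_assoc, ← mul_assoc]
    exact mul_left_inj' (inv_ne_zero hq0)
  rw [← hmap, LinearEquiv.finrank_map_eq]

end Intertwiners

namespace Quaternion

theorem re_mul_comm {R : Type*} [CommRing R] (a b : ℍ[R]) : (a * b).re = (b * a).re := by
  simp only [re_mul]
  ring

theorem mul_self_eq_neg_normSq {R : Type*} [CommRing R] {v : ℍ[R]} (hv : v.re = 0) :
    v * v = -normSq v := by
  rw [← self_mul_star]
  ext <;> simp [hv] <;> ring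

theorem normSq_coe_add_smul {R : Type*} [CommRing R] (c s : R) {u : ℍ[R]} (hu : u.re = 0) :
    normSq ((c : ℍ[R]) + s • u) = c ^ 2 + s ^ 2 * normSq u := by
  simp [normSq_def', hu]
  ring

variable {R : Type*} [Field R] [LinearOrder R] [IsStrictOrderedRing R]

theorem re_eq_of_mul_eq_mul {x y q : ℍ[R]} (h : x * q = q * y) (hq : q ≠ 0) : x.re = y.re := by
  have hy : y = q⁻¹ * (x * q) := by rw [h, ← mul_assoc, inv_mul_cancel₀ hq, one_mul]
  rw [hy, re_mul_comm, mul_assoc, mul_inv_cancel₀ hq, mul_one]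

theorem intertwiners_self_eq_span {v : ℍ[R]} (hv : v.re = 0) (hv0 : v ≠ 0) :
    intertwiners R v v = Submodule.span R {1, v} := by
  refine le_antisymm (fun p hp => ?_) (Submodule.span_le.2 ?_)
  · rw [mem_intertwiners, Quaternion.ext_iff] at hp
    simp only [re_mul, imI_mul, imJ_mul, imK_mul, hv] at hp
    obtain ⟨-, hI, hJ, hK⟩ := hp
    have hN : v.imI ^ 2 + v.imJ ^ 2 + v.imK ^ 2 ≠ 0 := by
      simpa [normSq_def', hv] using normSq_eq_zero.not.2 hv0
    rw [Submodule.mem_span_pair]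
    refine ⟨p.re, (v.imI * p.imI + v.imJ * p.imJ + v.imK * p.imK) /
      (v.imI ^ 2 + v.imJ ^ 2 + v.imK ^ 2), ?_⟩
    ext <;> simp [hv] <;> field_simp
    · linear_combination v.imJ * hK / 2 - v.imK * hJ / 2
    · linear_combination v.imK * hI / 2 - v.imI * hK / 2
    · linear_combination v.imI * hJ / 2 - v.imJ * hI / 2
  · rintro _ (rfl | rfl) <;> simp [mem_intertwiners]

theorem coe_re_eq_of_forall_commute {v : ℍ[R]} (h : ∀ x, v * x = x * v) :
    (v.re : ℍ[R]) = v := by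
  obtain ⟨i, hi⟩ : ∃ i : ℍ[R], i.re = 0 ∧ i.imI = 1 ∧ i.imJ = 0 ∧ i.imK = 0 :=
    ⟨⟨0, 1, 0, 0⟩, rfl, rfl, rfl, rfl⟩
  obtain ⟨j, hj⟩ : ∃ j : ℍ[R], j.re = 0 ∧ j.imI = 0 ∧ j.imJ = 1 ∧ j.imK = 0 :=
    ⟨⟨0, 0, 1, 0⟩, rfl, rfl, rfl, rfl⟩
  have hvi := Quaternion.ext_iff.1 (h i)
  have hvj := Quaternion.ext_iff.1 (h j)
  simp only [re_mul, imI_mul, imJ_mul, imK_mul, hi, hj] at hvi hvj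
  ext <;> simp <;> linarith

theorem exists_ne_zero_mul_eq_mul {v w : ℍ[R]} (hv : v * v = -1) (hw : w * w = -1) :
    ∃ q ≠ 0, v * q = q * w := by
  have hsol : ∀ x, v * (x - v * x * w) = (x - v * x * w) * w := fun x => by
    have h1 : v * (x - v * x * w) = v * x - (v * v) * x * w := by noncomm_ring
    have h2 : (x - v * x * w) * w = x * w - v * x * (w * w) := by noncomm_ring
    rw [h1, h2, hv, hw]
    noncomm_ring
  -- `x ↦ x - v x w` lands in the solution space; if it vanished, `w = -v` and `v` would be central.
  by_contra! hne
  have hfix : ∀ x, x = v * x * w := fun x => sub_eq_zero.1 (not_not.1 fun h => hne _ h (hsol x))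
  have hwv : w = -v := by
    have h1 := hfix 1
    rw [mul_one] at h1
    calc w = -(v * v) * w := by rw [hv, neg_neg, one_mul]
      _ = -v := by rw [neg_mul, mul_assoc, ← h1, mul_one]
  have hcomm : ∀ x, v * x = x * v := fun x => by
    conv_lhs => rw [hfix x, hwv]
    rw [mul_neg, mul_neg, ← mul_assoc, ← mul_assoc, hv, neg_one_mul, neg_mul, neg_neg]
  rw [← coe_re_eq_of_forall_commute hcomm, ← coe_mul, ← coe_one, ← coe_neg, coe_inj] at hv
  nlinarith [mul_self_nonneg v.re]

theorem finrank_intertwiners_self {v : ℍ[R]} (hv : v.re = 0) (hv0 : v ≠ 0) :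
    Module.finrank R (intertwiners R v v) = 2 := by
  have hli : LinearIndependent R ![1, v] := by
    refine (LinearIndependent.pair_iff' one_ne_zero).2 fun c hc => hv0 ?_
    have hc0 : c = 0 := by simpa [hv] using congrArg QuaternionAlgebra.re hc
    rw [← hc, hc0, zero_smul]
  rw [intertwiners_self_eq_span hv hv0, ← Matrix.range_cons_cons_empty 1 v ![],
    finrank_span_eq_card hli, Fintype.card_fin]

theorem finrank_intertwiners_eq_two {v w : ℍ[R]} (hv : v.re = 0) (hv1 : normSq v = 1)
    (hw : w.re = 0) (hw1 : normSq w = 1) : Module.finrank R (intertwiners R v w) = 2 := by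
  have hvv : v * v = -1 := by rw [mul_self_eq_neg_normSq hv, hv1, coe_one]
  have hww : w * w = -1 := by rw [mul_self_eq_neg_normSq hw, hw1, coe_one]
  obtain ⟨q, hq0, hq⟩ := exists_ne_zero_mul_eq_mul hvv hww
  rw [finrank_intertwiners_eq_of_mem (mem_intertwiners.2 hq) hq0,
    finrank_intertwiners_self hv (normSq_eq_zero.not.1 (hv1.trans_ne one_ne_zero))]

end Quaternion

theorem stmt17_general (a b : ℝ) (v w : Quaternion ℝ)
    (hv : v.re = 0) (hvn : ‖v‖ = 1) (hw : w.re = 0) (hwn : ‖w‖ = 1)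
    (l r : Quaternion ℝ)
    (hl : l = (Real.cos a : ℝ) + Real.sin a • v)
    (hr : r = (Real.cos b : ℝ) + Real.sin b • w)
    (L : Module.End ℝ (Quaternion ℝ))
    (hL : L = (LinearMap.mulRight ℝ r⁻¹).comp (LinearMap.mulLeft ℝ l))
    (hid : L ≠ LinearMap.id) :
    Module.finrank ℝ (Module.End.eigenspace L 1) = 2 ↔ Real.cos a = Real.cos b := by
  have hv1 : normSq v = 1 := by rw [normSq_eq_norm_mul_self, hvn, one_mul]
  have hw1 : normSq w = 1 := by rw [normSq_eq_norm_mul_self, hwn, one_mul]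
  have hr0 : r ≠ 0 := by
    rw [← normSq_eq_zero.ne, hr, normSq_coe_add_smul _ _ hw, hw1, mul_one, cos_sq_add_sin_sq]
    exact one_ne_zero
  rw [hL, eigenspace_mulRight_inv_comp_mulLeft l hr0]
  constructor
  · intro h2
    obtain ⟨⟨q, hq⟩, hq0⟩ := Module.finrank_pos_iff_exists_ne_zero.1 (h2.symm ▸ two_pos)
    have hre := re_eq_of_mul_eq_mul (mem_intertwiners.1 hq) (Subtype.coe_ne_coe.2 hq0)
    simpa [hl, hr, hv, hw] using hre
  · intro hcos
    have hsin : sin b ^ 2 = sin a ^ 2 := by rw [sin_sq, sin_sq, hcos]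
    have hsa : sin a ≠ 0 := by
      intro hsa
      have hsb : sin b = 0 := by simpa [hsa] using hsin
      have hca : cos a ≠ 0 := fun hca => by simpa [hsa, hca] using sin_sq_add_cos_sq a
      have hLid := mulRight_inv_comp_mulLeft_algebraMap (D := ℍ) hca
      rw [algebraMap_def] at hLid
      exact hid (by simpa [hL, hl, hr, hsa, hsb, ← hcos] using hLid)
    set t := sin b / sin a
    have ht : t ^ 2 = 1 := by rw [div_pow, hsin, div_self (pow_ne_zero 2 hsa)]
    have hr' : r = (cos a : ℍ) + sin a • t • w := by rw [hr, hcos, smul_smul, mul_div_cancel₀ _ hsa]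
    have hshift := intertwiners_algebraMap_add_smul (cos a) hsa v (t • w)
    rw [algebraMap_def] at hshift
    rw [hl, hr', hshift, finrank_intertwiners_eq_two hv hv1 (by simp [hw])
      (by rw [normSq_smul, ht, hw1, one_mul])]

/-- Let g ∈ SO(4) be q ↦ l q r⁻¹ with l = (cos α, sin α·v), r = (cos β, sin β·w) for
pure unit quaternions v, w (unit vectors of ℝ³). If g ≠ ±Id, then the fixed-point
subspace of g has dimension 2 if and only if cos α = cos β. -/
theorem stmt17 (a b : ℝ) (v w : Quaternion ℝ)
    (hv : v.re = 0) (hvn : ‖v‖ = 1) (hw : w.re = 0) (hwn : ‖w‖ = 1)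
    (l r : Quaternion ℝ)
    (hl : l = (Real.cos a : ℝ) + Real.sin a • v)
    (hr : r = (Real.cos b : ℝ) + Real.sin b • w)
    (L : Module.End ℝ (Quaternion ℝ))
    (hL : L = (LinearMap.mulRight ℝ r⁻¹).comp (LinearMap.mulLeft ℝ l))
    (hid : L ≠ LinearMap.id) (hnegid : L ≠ -LinearMap.id) :
    Module.finrank ℝ (Module.End.eigenspace L 1) = 2 ↔ Real.cos a = Real.cos b :=
  stmt17_general a b v w hv hvn hw hwn l r hl hr L hL hid
end
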